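/- The Lasso fit map y ↦ A·x̂_λ(A,y) is 1-Lipschitz with respect to the Euclidean norm: for all y, y' in R^M, ‖A·x̂_λ(A,y) − A·x̂_λ(A,y')‖ ≤ ‖y − y'‖. -/

import Mathlib

noncomputable def l2norm {M : ℕ} (v : Fin M → ℝ) : ℝ := Real.sqrt (∑ i, (v i) ^ 2)

noncomputable def lassoObj {M N : ℕ} (A : Matrix (Fin M) (Fin N) ℝ)
    (y : Fin M → ℝ) (lam : ℝ) (x : Fin N → ℝ) : ℝ :=
  (1 / 2) * (l2norm (A.mulVec x - y)) ^ 2 + M * lam * ∑ j, |x j|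

/-!
If `x` minimises `½‖A z - y‖² + g z` with `g` convex, comparing with the points of the segment from
`x` to any `z` and letting the step go to `0` gives the variational inequality
`⟪A x - y, A z - A x⟫ + g z - g x ≥ 0`. Adding the inequalities for `(x, y)` tested at `x'` and for
`(x', y')` tested at `x` cancels `g` and leaves `‖A x - A x'‖² ≤ ⟪y - y', A x - A x'⟫`, so the fit is
firmly nonexpansive, and Cauchy–Schwarz finishes.
-/

open Filter Set Topology
open scoped RealInnerProductSpace

lemma nonneg_of_forall_mem_Ioc_nonneg_add_mul {a b : ℝ}
    (h : ∀ t ∈ Ioc (0 : ℝ) 1, 0 ≤ a + t * b) : 0 ≤ a := by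
  have hcont : Continuous fun t : ℝ => a + t * b := by fun_prop
  have hlim : Tendsto (fun t : ℝ => a + t * b) (𝓝[>] 0) (𝓝 a) :=
    (hcont.tendsto' 0 a (by simp)).mono_left nhdsWithin_le_nhds
  refine ge_of_tendsto hlim ?_
  filter_upwards [Ioc_mem_nhdsGT (zero_lt_one' ℝ)] with t ht using h t ht

section LeastSquaresPlusConvex

variable {E F : Type*} [AddCommGroup E] [Module ℝ E]
  [NormedAddCommGroup F] [InnerProductSpace ℝ F] {A : E →ₗ[ℝ] F} {g : E → ℝ}

lemma inner_add_sub_nonneg_of_forall_le (hg : ConvexOn ℝ univ g) {x : E} {y : F}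
    (hx : ∀ z, ‖A x - y‖ ^ 2 / 2 + g x ≤ ‖A z - y‖ ^ 2 / 2 + g z) (z : E) :
    0 ≤ ⟪A x - y, A z - A x⟫ + (g z - g x) := by
  refine nonneg_of_forall_mem_Ioc_nonneg_add_mul (b := ‖A z - A x‖ ^ 2 / 2) fun t ⟨ht0, ht1⟩ => ?_
  have hconv : g ((1 - t) • x + t • z) ≤ (1 - t) * g x + t * g z :=
    hg.2 (mem_univ x) (mem_univ z) (by linarith) ht0.le (by ring)
  have hfit : A ((1 - t) • x + t • z) - y = (A x - y) + t • (A z - A x) := by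
    rw [map_add, map_smul, map_smul, sub_smul, one_smul, smul_sub]
    abel
  have hexpand : ‖A ((1 - t) • x + t • z) - y‖ ^ 2
      = ‖A x - y‖ ^ 2 + 2 * t * ⟪A x - y, A z - A x⟫ + t ^ 2 * ‖A z - A x‖ ^ 2 := by
    rw [hfit, norm_add_sq_real, inner_smul_right, norm_smul, mul_pow, Real.norm_eq_abs, sq_abs]
    ring
  have hmin := hx ((1 - t) • x + t • z)
  rw [hexpand] at hmin
  have : 0 ≤ t * (⟪A x - y, A z - A x⟫ + (g z - g x) + t * (‖A z - A x‖ ^ 2 / 2)) := by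
    nlinarith
  exact (mul_nonneg_iff_of_pos_left ht0).1 this

lemma norm_sq_map_sub_le_inner_of_forall_le (hg : ConvexOn ℝ univ g) {x x' : E} {y y' : F}
    (hx : ∀ z, ‖A x - y‖ ^ 2 / 2 + g x ≤ ‖A z - y‖ ^ 2 / 2 + g z)
    (hx' : ∀ z, ‖A x' - y'‖ ^ 2 / 2 + g x' ≤ ‖A z - y'‖ ^ 2 / 2 + g z) :
    ‖A x - A x'‖ ^ 2 ≤ ⟪y - y', A x - A x'⟫ := by
  have h := inner_add_sub_nonneg_of_forall_le hg hx x'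
  have h' := inner_add_sub_nonneg_of_forall_le hg hx' x
  have hsum : ⟪A x - y, A x' - A x⟫ + ⟪A x' - y', A x - A x'⟫
      = ⟪y - y', A x - A x'⟫ - ‖A x - A x'‖ ^ 2 := by
    rw [← neg_sub (A x) (A x'), inner_neg_right, neg_add_eq_sub, ← real_inner_self_eq_norm_sq,
      ← inner_sub_left, ← inner_sub_left]
    congr 1
    abel
  linarith

lemma norm_map_sub_le_of_forall_le (hg : ConvexOn ℝ univ g) {x x' : E} {y y' : F}
    (hx : ∀ z, ‖A x - y‖ ^ 2 / 2 + g x ≤ ‖A z - y‖ ^ 2 / 2 + g z)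
    (hx' : ∀ z, ‖A x' - y'‖ ^ 2 / 2 + g x' ≤ ‖A z - y'‖ ^ 2 / 2 + g z) :
    ‖A x - A x'‖ ≤ ‖y - y'‖ := by
  have hfirm := norm_sq_map_sub_le_inner_of_forall_le hg hx hx'
  have hcs := real_inner_le_norm (y - y') (A x - A x')
  nlinarith [norm_nonneg (A x - A x'), norm_nonneg (y - y')]

end LeastSquaresPlusConvex

lemma l2norm_eq_norm_toLp {M : ℕ} (v : Fin M → ℝ) : l2norm v = ‖WithLp.toLp 2 v‖ := by
  simp [l2norm, EuclideanSpace.norm_eq]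

lemma convexOn_const_mul_sum_abs {ι : Type*} [Fintype ι] {c : ℝ} (hc : 0 ≤ c) :
    ConvexOn ℝ univ fun x : ι → ℝ => c * ∑ j, |x j| := by
  have h := ((convexOn_norm convex_univ).comp_linearMap
    (WithLp.linearEquiv 1 ℝ (ι → ℝ)).symm.toLinearMap).smul hc
  rw [preimage_univ] at h
  refine h.congr fun x _ => ?_
  simp [PiLp.norm_eq_of_L1]

noncomputable def Matrix.toEuclideanMulVecLin {M N : ℕ} (A : Matrix (Fin M) (Fin N) ℝ) :
    (Fin N → ℝ) →ₗ[ℝ] EuclideanSpace ℝ (Fin M) :=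
  (WithLp.linearEquiv 2 ℝ (Fin M → ℝ)).symm.toLinearMap ∘ₗ A.mulVecLin

lemma Matrix.toEuclideanMulVecLin_apply {M N : ℕ} (A : Matrix (Fin M) (Fin N) ℝ) (z : Fin N → ℝ) :
    A.toEuclideanMulVecLin z = WithLp.toLp 2 (A.mulVec z) :=
  rfl

lemma lassoObj_eq {M N : ℕ} (A : Matrix (Fin M) (Fin N) ℝ) (y : Fin M → ℝ) (lam : ℝ)
    (z : Fin N → ℝ) :
    lassoObj A y lam z
      = ‖A.toEuclideanMulVecLin z - WithLp.toLp 2 y‖ ^ 2 / 2 + M * lam * ∑ j, |z j| := by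
  rw [lassoObj, l2norm_eq_norm_toLp, Matrix.toEuclideanMulVecLin_apply, ← WithLp.toLp_sub]
  ring

theorem lasso_fit_lipschitz {M N : ℕ} (A : Matrix (Fin M) (Fin N) ℝ) (lam : ℝ)
    (hlam : 0 < lam) (y y' : Fin M → ℝ) (x x' : Fin N → ℝ)
    (hx : ∀ z, lassoObj A y lam x ≤ lassoObj A y lam z)
    (hx' : ∀ z, lassoObj A y' lam x' ≤ lassoObj A y' lam z) :
    l2norm (A.mulVec x - A.mulVec x') ≤ l2norm (y - y') := by
  have hg := convexOn_const_mul_sum_abs (ι := Fin N) (by positivity : 0 ≤ (M : ℝ) * lam)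
  have h := norm_map_sub_le_of_forall_le hg (fun z => by simpa only [lassoObj_eq] using hx z)
    (fun z => by simpa only [lassoObj_eq] using hx' z)
  rw [l2norm_eq_norm_toLp, l2norm_eq_norm_toLp]
  simpa only [Matrix.toEuclideanMulVecLin_apply, ← WithLp.toLp_sub] using h
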